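/- Uniqueness part of Theorem 3.3/EvenFromPtoP: let n ∈ ℕ with n ≥ 2, let N ∈ ℕ with N ≥ 1, let p ∈ ℕ with p ≤ n−1, and let λ ∈ ℂ. Suppose P, Q, R ∈ ℂ[t] satisfy deg P ≤ N, deg Q ≤ N−1, deg R ≤ N−1 and the six identities (with ' the formal polynomial derivative): (1) 2t(t+1)P'' + (3−4N)tP' + (2λ+n−4N+1)P' + N(2N−1)P = 0; (2) 2P' + (2N−1)Q − 2tQ' + 2tR' + (λ+n−p−2N+1)R = 0; (3) −2P' + (λ+p−2N)R = 0; (4) 2tP' − 2N·P + (λ+p−2N)Q = 0; (5) 2t(t+1)Q'' + (5−4N)tQ' + (2λ+n−4N+3)Q' + (N−1)(2N−1)Q + 2tR' − (2N−2)R = 0; (6) 2t(t+1)R'' + (7−4N)tR' + (2λ+n−4N+3)R' + (N−1)(2N−3)R = 0. Then there exists c ∈ ℂ such that P(t) = c·(λ+p−2N)·Σ_{j=0}^{N} a_j^{(N)}(λ) t^j, Q(t) = −c·2N·(2λ+n−2N−1)·Σ_{j=0}^{N−1} b_j^{(N−1)}(λ−1) t^j, and R(t) = c·2N·Σ_{j=0}^{N−1}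 a_j^{(N−1)}(λ−1) t^j. -/

import Mathlib

open Finset Polynomial

noncomputable def aC (n N j : ℕ) (l : ℂ) : ℂ :=
  (-2 : ℂ) ^ (N - j) *
    ((N.factorial : ℂ) / ((j.factorial : ℂ) * ((2 * N - 2 * j).factorial : ℂ))) *
    ∏ k ∈ Finset.Ico j N, (2 * l - 4 * (N : ℂ) + 2 * (k : ℂ) + (n : ℂ) + 1)

noncomputable def bC (n N j : ℕ) (l : ℂ) : ℂ :=
  (-2 : ℂ) ^ (N - j) *
    ((N.factorial : ℂ) / ((j.factorial : ℂ) * ((2 * N - 2 * j + 1).factorial : ℂ))) *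
    ∏ k ∈ Finset.Ico j N, (2 * l - 4 * (N : ℂ) + 2 * (k : ℂ) + (n : ℂ) - 1)

noncomputable def bCZ (n M : ℕ) (j : ℤ) (l : ℂ) : ℂ :=
  if 0 ≤ j ∧ j ≤ (M : ℤ) then bC n M j.toNat l else 0

noncomputable def alphaC (n N i : ℕ) (l : ℂ) : ℂ :=
  (-1 : ℂ) ^ i * 2 ^ N * ((N.factorial : ℂ) / ((2 * N).factorial : ℂ)) * (N.choose i : ℂ) *
    (∏ k ∈ Finset.Icc (i + 1) N, (2 * l + (n : ℂ) - 2 * (k : ℂ))) *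
    ∏ k ∈ Finset.Icc 1 i, (2 * l + (n : ℂ) - 2 * (k : ℂ) - 2 * (N : ℂ) + 1)

noncomputable def betaC (n N i : ℕ) (l : ℂ) : ℂ :=
  (-1 : ℂ) ^ i * 2 ^ N * ((N.factorial : ℂ) / ((2 * N + 1).factorial : ℂ)) * (N.choose i : ℂ) *
    (∏ k ∈ Finset.Icc (i + 1) N, (2 * l + (n : ℂ) - 2 * (k : ℂ))) *
    ∏ k ∈ Finset.Icc 1 i, (2 * l + (n : ℂ) - 2 * (k : ℂ) - 2 * (N : ℂ) - 1)

noncomputable def gammaC (n N i : ℕ) (l p : ℂ) : ℂ :=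
  (-1 : ℂ) ^ i * 2 ^ N *
    ((N.factorial : ℂ) / (((N : ℂ) + 1) * ((2 * N + 1).factorial : ℂ))) *
    ((N + 1).choose i : ℂ) *
    ((l + p - 2 * (N : ℂ) - 1) * ((N : ℂ) + 1) * (2 * l + (n : ℂ) - 2 * (i : ℂ)) +
      (l + (n : ℂ) - p) * (2 * (N : ℂ) + 1) * ((N : ℂ) - (i : ℂ) + 1)) *
    (∏ k ∈ Finset.Icc (i + 1) N, (2 * l + (n : ℂ) - 2 * (k : ℂ))) *
    ∏ k ∈ Finset.Icc 1 (i - 1), (2 * l + (n : ℂ) - 2 * (k : ℂ) - 2 * (N : ℂ) - 1)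

noncomputable def poch (a : ℂ) (l : ℕ) : ℂ :=
  ∏ m ∈ Finset.range l, (a + (m : ℂ))

/-! Equations (1) and (6) are Gegenbauer-type equations whose coefficient recurrence is two-term
and nondegenerate below the top degree, so `P` and `R` are multiples of the even Gegenbauer
polynomials with parameters `(N, λ)` and `(N - 1, λ - 1)`; the top coefficient of (3) relates the
two multiples. The derivative of the first polynomial is `N` times the second, so (2) becomes
`(2N - 1) Q - 2t Q' = (a multiple of the second polynomial)`. The operator
`Q ↦ (2N - 1) Q - 2t Q'` acts on `t ^ j` by the odd, hence nonzero, scalar `2N - 1 - 2j`, so this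
determines `Q`, and a multiple of the odd Gegenbauer polynomial solves it. -/

section Coefficients

variable {R : Type*} [CommRing R]

theorem coeff_X_mul_derivative (S : R[X]) (m : ℕ) :
    (X * derivative S).coeff m = m * S.coeff m := by
  cases m with
  | zero => simp
  | succ m => rw [coeff_X_mul, coeff_derivative]; push_cast; ring

theorem coeff_succ_rec_of_ode {S : R[X]} {a b c : R}
    (h : C 2 * X * (X + 1) * derivative (derivative S) + C a * X * derivative S
       + C b * derivative S + C c * S = 0) (m : ℕ) :
    ((m : R) + 1) * (2 * m + b) * S.coeff (m + 1)
      + (2 * m * (m - 1) + a * m + c) * S.coeff m = 0 := by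
  have h' : C 2 * (X * derivative (X * derivative S)) + C 2 * derivative (X * derivative S)
      + C (a - 2) * (X * derivative S) + C (b - 2) * derivative S + C c * S = 0 := by
    rw [← h]; simp only [derivative_mul, derivative_X, one_mul, map_sub]; ring
  have hm := congrArg (coeff · m) h'
  simp only [coeff_add, coeff_C_mul, coeff_X_mul_derivative, coeff_derivative, coeff_zero] at hm
  push_cast at hm
  linear_combination hm

theorem coeff_C_mul_sub_X_mul_derivative (S : R[X]) (a : R) (m : ℕ) :
    (C a * S - C 2 * X * derivative S).coeff m = (a - 2 * m) * S.coeff m := by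
  rw [mul_assoc, coeff_sub, coeff_C_mul, coeff_C_mul, coeff_X_mul_derivative]; ring

end Coefficients

theorem eq_of_C_mul_sub_X_mul_derivative_eq {K : Type*} [Field K] [CharZero K] {S T : K[X]}
    (M : ℕ) (h : C (2 * M + 1 : K) * S - C 2 * X * derivative S
      = C (2 * M + 1 : K) * T - C 2 * X * derivative T) : S = T := by
  ext j
  have hj := congrArg (coeff · j) h
  simp only [coeff_C_mul_sub_X_mul_derivative] at hj
  refine mul_left_cancel₀ (fun h0 => ?_) hj
  have : ((2 * M + 1 - 2 * j : ℤ) : K) = 0 := by push_cast; linear_combination h0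
  exact absurd (Int.cast_eq_zero.mp this) (by omega)

theorem aC_self (n M : ℕ) (l : ℂ) : aC n M M l = 1 := by
  simp [aC, M.factorial_ne_zero]

theorem aC_succ_rec (n : ℕ) {M m : ℕ} (l : ℂ) (hm : m < M) :
    ((m : ℂ) + 1) * (2 * l + n - 4 * M + 2 * m + 1) * aC n M (m + 1) l
      + (2 * m - 2 * M + 1) * (m - M) * aC n M m l = 0 := by
  obtain ⟨e, rfl⟩ := Nat.exists_eq_add_of_lt hm
  have h2m : 2 * (m + e + 1) - 2 * m = 2 * e + 1 + 1 := by omega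
  have h2m' : 2 * (m + e + 1) - 2 * (m + 1) = 2 * e := by omega
  have hm' : m + e + 1 - m = e + 1 := by omega
  have hm'' : m + e + 1 - (m + 1) = e := by omega
  simp only [aC, h2m, h2m', hm', hm'', Nat.factorial_succ, Finset.prod_eq_prod_Ico_succ_bot hm]
  have := (2 * e).factorial_ne_zero
  have := m.factorial_ne_zero
  have := Nat.cast_add_one_ne_zero (R := ℂ) (2 * e)
  have := Nat.cast_add_one_ne_zero (R := ℂ) (2 * e + 1)
  have := Nat.cast_add_one_ne_zero (R := ℂ) m
  push_cast at *
  field_simp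
  ring

theorem succ_mul_aC_succ (n : ℕ) {M j : ℕ} (l : ℂ) (hj : j ≤ M) :
    ((j : ℂ) + 1) * aC n (M + 1) (j + 1) l = ((M : ℂ) + 1) * aC n M j (l - 1) := by
  obtain ⟨e, rfl⟩ := Nat.exists_eq_add_of_le hj
  have h2 : 2 * (j + e + 1) - 2 * (j + 1) = 2 * e := by omega
  have h2' : 2 * (j + e) - 2 * j = 2 * e := by omega
  have h1 : j + e + 1 - (j + 1) = e := by omega
  have h1' : j + e - j = e := by omega
  have hprod :
      ∏ k ∈ Ico (j + 1) (j + e + 1), (2 * l - 4 * ((j + e + 1 : ℕ) : ℂ) + 2 * k + n + 1)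
        = ∏ k ∈ Ico j (j + e), (2 * (l - 1) - 4 * ((j + e : ℕ) : ℂ) + 2 * k + n + 1) := by
    rw [← Finset.prod_Ico_add']
    exact Finset.prod_congr rfl fun k _ => by push_cast; ring
  simp only [aC, h2, h2', h1, h1', hprod, Nat.factorial_succ]
  have := j.factorial_ne_zero
  have := (2 * e).factorial_ne_zero
  have := Nat.cast_add_one_ne_zero (R := ℂ) j
  push_cast at *
  field_simp

theorem mul_bC_eq_mul_aC (n : ℕ) {M j : ℕ} (l : ℂ) (hj : j ≤ M) :
    (2 * M - 2 * j + 1) * (2 * l + n - 2 * M - 1) * bC n M j l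
      = (2 * l - 4 * M + 2 * j + n - 1) * aC n M j l := by
  set g : ℕ → ℂ := fun k => 2 * l - 4 * M + 2 * k + n - 1 with hg
  have hprod :
      g j * ∏ k ∈ Ico j M, (2 * l - 4 * M + 2 * k + n + 1)
        = (∏ k ∈ Ico j M, g k) * g M := by
    rw [← Finset.prod_Ico_succ_top hj, Finset.prod_eq_prod_Ico_succ_bot (Nat.lt_succ_of_le hj),
      ← Finset.prod_Ico_add']
    exact congrArg _ (Finset.prod_congr rfl fun k _ => by simp only [hg]; push_cast; ring)
  obtain ⟨e, rfl⟩ := Nat.exists_eq_add_of_le hj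
  have h2 : 2 * (j + e) - 2 * j = 2 * e := by omega
  have h1 : j + e - j = e := by omega
  simp only [aC, bC, h2, h1, Nat.factorial_succ]
  generalize ∏ k ∈ Ico j (j + e), g k = B at hprod ⊢
  generalize ∏ k ∈ Ico j (j + e), (2 * l - 4 * ((j + e : ℕ) : ℂ) + 2 * k + n + 1) = A
    at hprod ⊢
  have := j.factorial_ne_zero
  have := (2 * e).factorial_ne_zero
  have := Nat.cast_add_one_ne_zero (R := ℂ) (2 * e)
  simp only [hg] at hprod
  push_cast at *
  field_simp
  linear_combination -(((j + e).factorial : ℂ) * (2 * (e : ℂ) + 1)) * hprod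

noncomputable def evenGegenbauer (n N : ℕ) (l : ℂ) : ℂ[X] :=
  ∑ j ∈ range (N + 1), C (aC n N j l) * X ^ j

noncomputable def oddGegenbauer (n N : ℕ) (l : ℂ) : ℂ[X] :=
  ∑ j ∈ range (N + 1), C (bC n N j l) * X ^ j

theorem coeff_evenGegenbauer (n N j : ℕ) (l : ℂ) :
    (evenGegenbauer n N l).coeff j = if j ≤ N then aC n N j l else 0 := by
  simp [evenGegenbauer]

theorem coeff_oddGegenbauer (n N j : ℕ) (l : ℂ) :
    (oddGegenbauer n N l).coeff j = if j ≤ N then bC n N j l else 0 := by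
  simp [oddGegenbauer]

theorem derivative_evenGegenbauer (n M : ℕ) (l : ℂ) :
    derivative (evenGegenbauer n (M + 1) l) = C ((M : ℂ) + 1) * evenGegenbauer n M (l - 1) := by
  ext j
  rw [coeff_derivative, coeff_C_mul, coeff_evenGegenbauer, coeff_evenGegenbauer]
  split_ifs with hj
  · rw [mul_comm, succ_mul_aC_succ n l (by omega)]
  · omega
  · omega
  · simp

theorem oddGegenbauer_euler (n M : ℕ) (l : ℂ) :
    C (2 * l + n - 2 * M - 1) * (C (2 * M + 1 : ℂ) * oddGegenbauer n M l
        - C 2 * X * derivative (oddGegenbauer n M l))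
      = C (2 * l + n - 4 * M - 1) * evenGegenbauer n M l
        + C 2 * (X * derivative (evenGegenbauer n M l)) := by
  ext j
  rw [coeff_C_mul, coeff_C_mul_sub_X_mul_derivative, coeff_add, coeff_C_mul, coeff_C_mul,
    coeff_X_mul_derivative, coeff_evenGegenbauer, coeff_oddGegenbauer]
  split_ifs with hj
  · linear_combination mul_bC_eq_mul_aC n l hj
  · simp

theorem eq_C_mul_evenGegenbauer_of_ode {n M : ℕ} {l a b c : ℂ} {S : ℂ[X]}
    (hd : S.natDegree ≤ M)
    (h : C 2 * X * (X + 1) * derivative (derivative S) + C a * X * derivative S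
       + C b * derivative S + C c * S = 0)
    (ha : a = 3 - 4 * M) (hb : b = 2 * l + n - 4 * M + 1) (hc : c = M * (2 * M - 1)) :
    S = C (S.coeff M) * evenGegenbauer n M l := by
  ext j
  rw [coeff_C_mul, coeff_evenGegenbauer]
  split_ifs with hj
  · induction hj using Nat.decreasingInduction with
    | self => rw [aC_self, mul_one]
    | of_succ k hk ih =>
      have hS := coeff_succ_rec_of_ode h k
      have haC := aC_succ_rec n l hk
      subst a b c
      have hodd : ((2 * k - 2 * M + 1 : ℤ) : ℂ) ≠ 0 := Int.cast_ne_zero.mpr (by omega)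
      have hden : (2 * k - 2 * M + 1) * ((k : ℂ) - M) ≠ 0 := by
        push_cast at hodd
        exact mul_ne_zero hodd (sub_ne_zero.mpr (Nat.cast_injective.ne hk.ne))
      refine mul_left_cancel₀ hden ?_
      linear_combination
        hS - S.coeff M * haC - ((k : ℂ) + 1) * (2 * l + n - 4 * M + 2 * k + 1) * ih
  · rw [mul_zero, coeff_eq_zero_of_natDegree_lt (hd.trans_lt (not_le.mp hj))]

theorem eq_C_mul_oddGegenbauer_of_euler {n M : ℕ} {l r : ℂ} {Q : ℂ[X]}
    (h : C (2 * M + 1 : ℂ) * Q - C 2 * X * derivative Q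
      = C r * (C (2 * l + n - 4 * M - 1) * evenGegenbauer n M l
        + C 2 * (X * derivative (evenGegenbauer n M l)))) :
    Q = C (r * (2 * l + n - 2 * M - 1)) * oddGegenbauer n M l := by
  apply eq_of_C_mul_sub_X_mul_derivative_eq M
  rw [h, ← oddGegenbauer_euler, derivative_C_mul, C_mul]
  ring

theorem even_singular_vector_system_uniqueness_general (n : ℕ) (N : ℕ) (hN : 1 ≤ N)
    (p : ℕ) (l : ℂ) (P Q R : Polynomial ℂ)
    (hdP : P.natDegree ≤ N) (hdR : R.natDegree ≤ N - 1)
    (h1 : C 2 * X * (X + 1) * derivative (derivative P) + C (3 - 4 * (N : ℂ)) * X * derivative P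
          + C (2 * l + (n : ℂ) - 4 * (N : ℂ) + 1) * derivative P
          + C ((N : ℂ) * (2 * (N : ℂ) - 1)) * P = 0)
    (h2 : C 2 * derivative P + C (2 * (N : ℂ) - 1) * Q - C 2 * X * derivative Q
          + C 2 * X * derivative R + C (l + (n : ℂ) - (p : ℂ) - 2 * (N : ℂ) + 1) * R = 0)
    (h3 : -(C 2 * derivative P) + C (l + (p : ℂ) - 2 * (N : ℂ)) * R = 0)
    (h6 : C 2 * X * (X + 1) * derivative (derivative R) + C (7 - 4 * (N : ℂ)) * X * derivative R
          + C (2 * l + (n : ℂ) - 4 * (N : ℂ) + 3) * derivative R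
          + C (((N : ℂ) - 1) * (2 * (N : ℂ) - 3)) * R = 0) :
    ∃ c : ℂ,
      P = C c * (C (l + (p : ℂ) - 2 * (N : ℂ)) *
            ∑ j ∈ Finset.range (N + 1), C (aC n N j l) * X ^ j) ∧
      Q = C c * (C (-(2 * (N : ℂ)) * (2 * l + (n : ℂ) - 2 * (N : ℂ) - 1)) *
            ∑ j ∈ Finset.range N, C (bC n (N - 1) j (l - 1)) * X ^ j) ∧
      R = C c * (C (2 * (N : ℂ)) *
            ∑ j ∈ Finset.range N, C (aC n (N - 1) j (l - 1)) * X ^ j) := by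
  obtain ⟨M, rfl⟩ : ∃ M, N = M + 1 := ⟨N - 1, by omega⟩
  rw [Nat.add_sub_cancel] at hdR ⊢
  have hP := eq_C_mul_evenGegenbauer_of_ode hdP h1 rfl rfl rfl
  have hR := eq_C_mul_evenGegenbauer_of_ode (l := l - 1) hdR h6
    (by push_cast; ring) (by push_cast; ring) (by push_cast; ring)
  have htop :
      (l + p - 2 * ((M + 1 : ℕ) : ℂ)) * R.coeff M = 2 * ((M : ℂ) + 1) * P.coeff (M + 1) := by
    have h3M := congrArg (coeff · M) h3
    simp only [coeff_add, coeff_neg, coeff_C_mul, coeff_derivative, coeff_zero] at h3M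
    linear_combination h3M
  have hQ : Q = C (-R.coeff M * (2 * (l - 1) + n - 2 * M - 1)) * oddGegenbauer n M (l - 1) := by
    apply eq_C_mul_oddGegenbauer_of_euler
    rw [hP, hR, derivative_C_mul, derivative_C_mul, derivative_evenGegenbauer] at h2
    have hCtop := congrArg C htop
    simp only [map_add, map_sub, map_mul, map_neg, map_natCast, map_one, map_ofNat, Nat.cast_add,
      Nat.cast_one] at h2 hCtop ⊢
    linear_combination h2 + evenGegenbauer n M (l - 1) * hCtop
  have hM : (2 * ((M : ℂ) + 1)) ≠ 0 := by exact_mod_cast (2 * M + 1).succ_ne_zero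
  refine ⟨R.coeff M / (2 * ((M : ℂ) + 1)), hP.trans ?_, hQ.trans ?_, hR.trans ?_⟩ <;>
    rw [← mul_assoc, ← C_mul] <;> congr 2 <;> push_cast at htop ⊢ <;> field_simp
  · linear_combination -htop
  · ring

theorem even_singular_vector_system_uniqueness (n : ℕ) (hn : 2 ≤ n) (N : ℕ) (hN : 1 ≤ N)
    (p : ℕ) (hp : p ≤ n - 1) (l : ℂ) (P Q R : Polynomial ℂ)
    (hdP : P.natDegree ≤ N) (hdQ : Q.natDegree ≤ N - 1) (hdR : R.natDegree ≤ N - 1)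
    (h1 : C 2 * X * (X + 1) * derivative (derivative P) + C (3 - 4 * (N : ℂ)) * X * derivative P
          + C (2 * l + (n : ℂ) - 4 * (N : ℂ) + 1) * derivative P
          + C ((N : ℂ) * (2 * (N : ℂ) - 1)) * P = 0)
    (h2 : C 2 * derivative P + C (2 * (N : ℂ) - 1) * Q - C 2 * X * derivative Q
          + C 2 * X * derivative R + C (l + (n : ℂ) - (p : ℂ) - 2 * (N : ℂ) + 1) * R = 0)
    (h3 : -(C 2 * derivative P) + C (l + (p : ℂ) - 2 * (N : ℂ)) * R = 0)
    (h4 : C 2 * X * derivative P - C (2 * (N : ℂ)) * P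
          + C (l + (p : ℂ) - 2 * (N : ℂ)) * Q = 0)
    (h5 : C 2 * X * (X + 1) * derivative (derivative Q) + C (5 - 4 * (N : ℂ)) * X * derivative Q
          + C (2 * l + (n : ℂ) - 4 * (N : ℂ) + 3) * derivative Q
          + C (((N : ℂ) - 1) * (2 * (N : ℂ) - 1)) * Q
          + C 2 * X * derivative R - C (2 * (N : ℂ) - 2) * R = 0)
    (h6 : C 2 * X * (X + 1) * derivative (derivative R) + C (7 - 4 * (N : ℂ)) * X * derivative R
          + C (2 * l + (n : ℂ) - 4 * (N : ℂ) + 3) * derivative R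
          + C (((N : ℂ) - 1) * (2 * (N : ℂ) - 3)) * R = 0) :
    ∃ c : ℂ,
      P = C c * (C (l + (p : ℂ) - 2 * (N : ℂ)) *
            ∑ j ∈ Finset.range (N + 1), C (aC n N j l) * X ^ j) ∧
      Q = C c * (C (-(2 * (N : ℂ)) * (2 * l + (n : ℂ) - 2 * (N : ℂ) - 1)) *
            ∑ j ∈ Finset.range N, C (bC n (N - 1) j (l - 1)) * X ^ j) ∧
      R = C c * (C (2 * (N : ℂ)) *
            ∑ j ∈ Finset.range N, C (aC n (N - 1) j (l - 1)) * X ^ j) :=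
  even_singular_vector_system_uniqueness_general n N hN p l P Q R hdP hdR h1 h2 h3 h6
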